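/- arXiv:2105.12775 — 2 statements merged into one kernel-verified Lean document; each statement's English description precedes it below -/
import Mathlib

section
/- Minimizing ∑ᵢ βᵢ yᵢ − τ ∑ᵢ log βᵢ over β ∈ ℝ³ subject to βᵢ > 0 and ∑ᵢ βᵢ = 1 (with τ > 0, yᵢ ≥ 0) has the unique solution βᵢ* = τ/(yᵢ + φ), where φ ∈ ℝ is the unique number with yᵢ + φ > 0 for all i and ∑ᵢ τ/(yᵢ + φ) = 1. -/
open Finset

lemma log_diff_le (a b : ℝ) (ha : 0 < a) (hb : 0 < b) :
    Real.log a - Real.log b ≤ (a - b) / b := by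
  have h := Real.log_le_sub_one_of_pos (div_pos ha hb)
  rw [Real.log_div ha.ne' hb.ne'] at h
  have e : (a - b) / b = a / b - 1 := by field_simp
  linarith

lemma log_diff_lt (a b : ℝ) (ha : 0 < a) (hb : 0 < b) (hne : a ≠ b) :
    Real.log a - Real.log b < (a - b) / b := by
  have hne' : a / b ≠ 1 := by
    intro h
    exact hne (by field_simp at h; linarith)
  have h := Real.log_lt_sub_one_of_pos (div_pos ha hb) hne'
  rw [Real.log_div ha.ne' hb.ne'] at h
  have e : (a - b) / b = a / b - 1 := by field_simp
  linarith

theorem adaptive_weights_solution (τ : ℝ) (hτ : 0 < τ)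
    (y : Fin 3 → ℝ) (hy : ∀ i, 0 ≤ y i)
    (φ : ℝ) (hφpos : ∀ i, 0 < y i + φ)
    (hφsum : ∑ i : Fin 3, τ / (y i + φ) = 1)
    (hφuniq : ∀ ψ : ℝ, (∀ i, 0 < y i + ψ) →
      (∑ i : Fin 3, τ / (y i + ψ) = 1) → ψ = φ)
    (f : (Fin 3 → ℝ) → ℝ)
    (hf : f = fun β => ∑ i : Fin 3, β i * y i - τ * ∑ i : Fin 3, Real.log (β i))
    (βstar : Fin 3 → ℝ) (hβstar : βstar = fun i => τ / (y i + φ)) :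
    (∀ i, 0 < βstar i) ∧ (∑ i : Fin 3, βstar i = 1) ∧
    (∀ β : Fin 3 → ℝ, (∀ i, 0 < β i) → (∑ i : Fin 3, β i = 1) →
      f βstar ≤ f β ∧ (f β = f βstar → β = βstar)) := by
  subst hβstar hf
  have hbpos : ∀ i, 0 < τ / (y i + φ) := fun i => div_pos hτ (hφpos i)
  refine ⟨hbpos, hφsum, ?_⟩
  intro β hβpos hβsum
  have key : ∀ i : Fin 3,
      τ * (Real.log (β i) - Real.log (τ / (y i + φ)))
        ≤ (β i - τ / (y i + φ)) * (y i + φ) := by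
    intro i
    have h := log_diff_le (β i) (τ / (y i + φ)) (hβpos i) (hbpos i)
    rw [div_div_eq_mul_div] at h
    calc τ * (Real.log (β i) - Real.log (τ / (y i + φ)))
        ≤ τ * ((β i - τ / (y i + φ)) * (y i + φ) / τ) :=
          mul_le_mul_of_nonneg_left h hτ.le
      _ = (β i - τ / (y i + φ)) * (y i + φ) := by field_simp
  have keystrict : ∀ i : Fin 3, β i ≠ τ / (y i + φ) →
      τ * (Real.log (β i) - Real.log (τ / (y i + φ)))
        < (β i - τ / (y i + φ)) * (y i + φ) := by
    intro i hne
    have h := log_diff_lt (β i) (τ / (y i + φ)) (hβpos i) (hbpos i) hne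
    rw [div_div_eq_mul_div] at h
    calc τ * (Real.log (β i) - Real.log (τ / (y i + φ)))
        < τ * ((β i - τ / (y i + φ)) * (y i + φ) / τ) :=
          (mul_lt_mul_iff_right₀ hτ).mpr h
      _ = (β i - τ / (y i + φ)) * (y i + φ) := by field_simp
  have exp : ∀ i : Fin 3, (β i - τ / (y i + φ)) * (y i + φ)
      = β i * y i + β i * φ - τ / (y i + φ) * y i - τ / (y i + φ) * φ := by
    intro i; ring
  simp only [Fin.sum_univ_three] at hφsum hβsum ⊢
  have k0 := key 0; have k1 := key 1; have k2 := key 2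
  have e0 := exp 0; have e1 := exp 1; have e2 := exp 2
  have hsφ : β 0 * φ + β 1 * φ + β 2 * φ = φ := by linear_combination φ * hβsum
  have hbφ : τ / (y 0 + φ) * φ + τ / (y 1 + φ) * φ + τ / (y 2 + φ) * φ = φ := by
    linear_combination φ * hφsum
  constructor
  · linarith [k0, k1, k2, e0, e1, e2]
  · intro heq
    funext i
    by_contra hne
    fin_cases i
    · linarith [keystrict 0 hne, k1, k2, e0, e1, e2]
    · linarith [k0, keystrict 1 hne, k2, e0, e1, e2]
    · linarith [k0, k1, keystrict 2 hne, e0, e1, e2]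
end

section
/- For a 2×2 real symmetric matrix M with fixed eigenvalues η₁ ≥ η₂ and variable eigenvector angle θ, the Frobenius distance ‖E(η₁,η₂,θ) − E(η̄₁,η̄₂,θ̄)‖_F² (with η̄₁ ≥ η̄₂) is minimized over θ at θ = θ̄, and at the minimum it equals (η₁−η̄₁)² + (η₂−η̄₂)². -/
open Real Matrix

noncomputable def rot (θ : ℝ) : Matrix (Fin 2) (Fin 2) ℝ :=
  !![Real.cos θ, -Real.sin θ; Real.sin θ, Real.cos θ]

/-- Symmetric matrix with eigenvalues `η1, η2` and eigenvector angle `θ`. -/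
noncomputable def eigM (η1 η2 θ : ℝ) : Matrix (Fin 2) (Fin 2) ℝ :=
  rot θ * Matrix.diagonal ![η1, η2] * (rot θ)ᵀ

noncomputable def frobSq (A B : Matrix (Fin 2) (Fin 2) ℝ) : ℝ :=
  ∑ i : Fin 2, ∑ j : Fin 2, (A i j - B i j) ^ 2

lemma diag2 (a b : ℝ) : Matrix.diagonal ![a,b] = !![a,0;0,b] := by
  ext i j; fin_cases i <;> fin_cases j <;> simp [Matrix.diagonal]

lemma rotT (θ : ℝ) : (rot θ)ᵀ = !![Real.cos θ, Real.sin θ; -Real.sin θ, Real.cos θ] := by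
  ext i j; fin_cases i <;> fin_cases j <;> simp [rot]

lemma eigM_eq (a b t : ℝ) : eigM a b t =
    !![a*cos t^2 + b*sin t^2, (a-b)*cos t*sin t; (a-b)*cos t*sin t, a*sin t^2 + b*cos t^2] := by
  rw [eigM, diag2, rotT, rot, Matrix.mul_fin_two, Matrix.mul_fin_two]
  ring_nf

lemma frobSq_eq (a b A B t T : ℝ) : frobSq (eigM a b t) (eigM A B T) =
    (a*cos t^2 + b*sin t^2 - (A*cos T^2 + B*sin T^2))^2
    + 2*((a-b)*cos t*sin t - (A-B)*cos T*sin T)^2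
    + (a*sin t^2 + b*cos t^2 - (A*sin T^2 + B*cos T^2))^2 := by
  rw [eigM_eq, eigM_eq]
  simp [frobSq, Fin.sum_univ_two]
  ring

theorem eigenvector_angle_alignment (η1 η2 η1bar η2bar θbar : ℝ)
    (h : η2 ≤ η1) (hbar : η2bar ≤ η1bar) :
    (∀ θ : ℝ, frobSq (eigM η1 η2 θbar) (eigM η1bar η2bar θbar) ≤
      frobSq (eigM η1 η2 θ) (eigM η1bar η2bar θbar)) ∧
    frobSq (eigM η1 η2 θbar) (eigM η1bar η2bar θbar) =
      (η1 - η1bar) ^ 2 + (η2 - η2bar) ^ 2 := by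
  have hT := sin_sq_add_cos_sq θbar
  constructor
  · intro θ
    have ht := sin_sq_add_cos_sq θ
    have key : frobSq (eigM η1 η2 θ) (eigM η1bar η2bar θbar)
        - frobSq (eigM η1 η2 θbar) (eigM η1bar η2bar θbar)
        = 2 * (η1 - η2) * (η1bar - η2bar) * (sin θ * cos θbar - cos θ * sin θbar)^2 := by
      rw [frobSq_eq, frobSq_eq]
      linear_combination ((η1^2+η2^2)*(1+sin θ^2+cos θ^2)
          - 2*(η1*η1bar+η2*η2bar)*(sin θbar^2+cos θbar^2)) * ht
        + (2*(η1*η1bar+η2*η2bar)*(sin θbar^2+cos θbar^2)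
          - (η1^2+η2^2)*(1+sin θbar^2+cos θbar^2)) * hT
    nlinarith [sq_nonneg (sin θ * cos θbar - cos θ * sin θbar), mul_nonneg (sub_nonneg.2 h) (sub_nonneg.2 hbar)]
  · rw [frobSq_eq]
    linear_combination ((η1-η1bar)^2+(η2-η2bar)^2)*(1+sin θbar^2+cos θbar^2) * hT
end
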